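/- arXiv:1003.0526 — 2 statements merged into one kernel-verified Lean document; each statement's English description precedes it below -/
import Mathlib

section
/- In the generic setting: for all integers ν ≥ 0 and t ≥ 0 there is an isomorphism of A-modules (G_{ν+t}/L^{ν+1}G_{t−1}) ⊗_B (B/𝔟) ≅ S_{ν+t}/N^{ν+1}S_{t−1}, where A is regarded as a B-algebra via the substitution map φ. -/
/-!
STATEMENT 6: In the generic setting (with `N` a parameter module in `F = A^r`, `w` a minimal
generating family of `N`, giving the matrix `Ñ = (c_ij)`, `c_ij = w j i`, of a minimal free
presentation of `F/N`, and `𝔟 = ker φ = (X_ij - c_ij)B` where `φ : B → A` is the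
substitution map `X_ij ↦ c_ij`): for all `ν, t ≥ 0` there is an isomorphism of `A`-modules
`(G_{ν+t}/L^{ν+1}G_{t-1}) ⊗_B (B/𝔟) ≅ S_{ν+t}/N^{ν+1}S_{t-1}`.

Here `W ⊗_B (B/𝔟)` is realized as `W/𝔟W`, with `A`-module structure obtained by restricting
scalars along the canonical map `A → B` (which coincides with the structure via the
isomorphism `B/𝔟 ≅ A` induced by `φ`, since `φ` splits `A → B`).  On the `A`-side,
`S = Sym_A(A^r)` is `MvPolynomial (Fin r) A`, `N^{ν+1}S_{t-1}` is the indicated submodule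
of `S_{ν+t}`, with the convention `N^{ν+1}S_{-1} = I(N)·N^ν`, `I(N)` being the 0-th Fitting
ideal of `F/N` (the ideal of maximal minors of `Ñ`).
-/

open MvPolynomial IsLocalRing

section GenericSetting

variable (A : Type*) [CommRing A] [IsLocalRing A] (r n : ℕ)

/-- The graded maximal ideal `(𝔪, X)` of the polynomial ring `A[X_ij]`. -/
noncomputable def gradedMaxIdeal : Ideal (MvPolynomial (Fin r × Fin n) A) :=
  Ideal.span ((MvPolynomial.C '' ((maximalIdeal A) : Set A)) ∪ Set.range MvPolynomial.X)

lemma gradedMaxIdeal_eq_ker :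
    gradedMaxIdeal A r n =
      RingHom.ker ((residue A).comp
        (constantCoeff : MvPolynomial (Fin r × Fin n) A →+* A)) := by
  apply le_antisymm
  · rw [gradedMaxIdeal, Ideal.span_le]
    rintro p (⟨m, hm, rfl⟩ | ⟨i, rfl⟩)
    · rw [SetLike.mem_coe, RingHom.mem_ker, RingHom.comp_apply, constantCoeff_C]
      exact Ideal.Quotient.eq_zero_iff_mem.mpr hm
    · rw [SetLike.mem_coe, RingHom.mem_ker, RingHom.comp_apply, constantCoeff_X]
      simp
  · intro p hp
    rw [RingHom.mem_ker, RingHom.comp_apply] at hp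
    replace hp : constantCoeff p ∈ maximalIdeal A := Ideal.Quotient.eq_zero_iff_mem.mp hp
    have h1 : (MvPolynomial.C (constantCoeff p) : MvPolynomial (Fin r × Fin n) A) ∈
        gradedMaxIdeal A r n := Ideal.subset_span (Or.inl ⟨_, hp, rfl⟩)
    have h2 : p - MvPolynomial.C (constantCoeff p) ∈ gradedMaxIdeal A r n := by
      have hX : p - MvPolynomial.C (constantCoeff p) ∈
          Ideal.span (MvPolynomial.X '' (Set.univ : Set (Fin r × Fin n)) :
            Set (MvPolynomial (Fin r × Fin n) A)) := by
        rw [mem_ideal_span_X_image]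
        intro m hm
        simp only [MvPolynomial.mem_support_iff] at hm
        by_cases h : m = 0
        · exfalso
          apply hm
          subst h
          simp [MvPolynomial.constantCoeff_eq]
        · obtain ⟨i, hi⟩ := Finsupp.ne_iff.mp h
          exact ⟨i, trivial, by simpa using hi⟩
      refine Ideal.span_mono ?_ hX
      rintro q ⟨i, -, rfl⟩
      exact Or.inr ⟨i, rfl⟩
    simpa using add_mem h1 h2

instance gradedMaxIdeal_isMaximal : (gradedMaxIdeal A r n).IsMaximal := by
  rw [gradedMaxIdeal_eq_ker]
  have hsurj : Function.Surjective
      ((residue A).comp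
        (constantCoeff : MvPolynomial (Fin r × Fin n) A →+* A)) :=
    residue_surjective.comp fun a => ⟨MvPolynomial.C a, constantCoeff_C _ a⟩
  exact RingHom.ker_isMaximal_of_surjective _ hsurj

-- `B = A[X]_{(𝔪,X)}`: any localization of `A[X]` at the graded maximal ideal `(𝔪, X)`.
variable (B : Type*) [CommRing B] [Algebra (MvPolynomial (Fin r × Fin n) A) B]
  [IsLocalization.AtPrime B (gradedMaxIdeal A r n)]

/-- The entries of the generic matrix `X`, viewed in `B`. -/
noncomputable def xvar (p : Fin r × Fin n) : B :=
  algebraMap (MvPolynomial (Fin r × Fin n) A) B (MvPolynomial.X p)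

/-- The submodule `L = Im(X : B^n → B^r)` of `G = B^r`, spanned by the columns of the
generic matrix. -/
noncomputable def genericColSpan : Submodule B (Fin r → B) :=
  Submodule.span B (Set.range fun j : Fin n => fun i : Fin r => xvar A r n B (i, j))

/-- The canonical embedding of a free module `B^r` onto the degree-one component of
`Sym_B(B^r) = B[T_1, …, T_r]`, sending `v` to `∑ i, v i • T i`. -/
noncomputable def symEmb (C : Type*) [CommRing C] (r : ℕ) :
    (Fin r → C) →ₗ[C] MvPolynomial (Fin r) C :=
  ∑ i : Fin r, LinearMap.smulRight (LinearMap.proj i) (MvPolynomial.X i)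

/-- `L^ν`, the degree-`ν` component of the image `R(L)` of `Sym_B(L) → Sym_B(G)`. -/
noncomputable def Lpow (ν : ℕ) : Submodule B (MvPolynomial (Fin r) B) :=
  ((genericColSpan A r n B).map (symEmb B r)) ^ ν

/-- The ideal `I_s(X)B` of `s × s` minors of the generic matrix `X`. -/
noncomputable def minorsIdeal (s : ℕ) : Ideal B :=
  Ideal.span (Set.range fun rc : (Fin s ↪ Fin r) × (Fin s ↪ Fin n) =>
    (Matrix.of fun i j => xvar A r n B (rc.1 i, rc.2 j)).det)

/-- The ideal `I_r(X)B` of maximal minors of the generic matrix `X`. -/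
noncomputable def maxMinorsIdeal : Ideal B :=
  Ideal.span (Set.range fun c : Fin r ↪ Fin n =>
    (Matrix.of fun i j => xvar A r n B (i, c j)).det)

/-- `I_r(X)B` viewed inside the degree-`0` component of `Sym_B(G)`. -/
noncomputable def maxMinorsSub : Submodule B (MvPolynomial (Fin r) B) :=
  Submodule.map (Algebra.linearMap B (MvPolynomial (Fin r) B))
    (maxMinorsIdeal A r n B : Submodule B B)

/-- The submodule `L^{ν+1}G_{t-1}` of `Sym_B(G)`, with the convention
`L·G_{-1} = I_r(X)B`, so that for `t = 0` it equals `I_r(X)·L^ν`. -/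
noncomputable def LGdenom (ν t : ℕ) : Submodule B (MvPolynomial (Fin r) B) :=
  match t with
  | 0 => maxMinorsSub A r n B * Lpow A r n B ν
  | t' + 1 => Lpow A r n B (ν + 1) * homogeneousSubmodule (Fin r) B t'

/-- The quotient `G_{ν+t}/L^{ν+1}G_{t-1}`. -/
noncomputable abbrev GQuot (ν t : ℕ) :=
  homogeneousSubmodule (Fin r) B (ν + t) ⧸
    (LGdenom A r n B ν t).comap (homogeneousSubmodule (Fin r) B (ν + t)).subtype

end GenericSetting

noncomputable def minGens {A : Type*} [CommRing A] {M : Type*} [AddCommGroup M] [Module A M]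
    (N : Submodule A M) : ℕ :=
  sInf {k : ℕ | ∃ s : Finset M, s.card = k ∧ Submodule.span A (s : Set M) = N}

structure IsParameterModule (A : Type*) [CommRing A] [IsLocalRing A] (d r : ℕ)
    (N : Submodule A (Fin r → A)) : Prop where
  finiteLength : IsFiniteLength A ((Fin r → A) ⧸ N)
  le_smul_top : N ≤ (IsLocalRing.maximalIdeal A) • (⊤ : Submodule A (Fin r → A))
  mu_eq : minGens N = d + r - 1

/-- `N^ν`, the degree-`ν` component of the image of `Sym_A(N) → Sym_A(F)`. -/
noncomputable def modulePow {A : Type*} [CommRing A] {r : ℕ}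
    (N : Submodule A (Fin r → A)) (ν : ℕ) : Submodule A (MvPolynomial (Fin r) A) :=
  (N.map (symEmb A r)) ^ ν

/-- The 0-th Fitting ideal `I(N)`: the ideal of maximal minors of the `r × n` matrix whose
`j`-th column is `w j`. -/
noncomputable def fittingIdeal {A : Type*} [CommRing A] {r n : ℕ}
    (w : Fin n → (Fin r → A)) : Ideal A :=
  Ideal.span (Set.range fun c : Fin r ↪ Fin n => (Matrix.of fun i i' => w (c i') i).det)

/-- The submodule `N^{ν+1}S_{t-1}` of `S_{ν+t}`, with the convention
`N^{ν+1}S_{-1} = I(N)·N^ν`. -/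
noncomputable def NSdenom {A : Type*} [CommRing A] {r : ℕ}
    (N : Submodule A (Fin r → A)) (IN : Ideal A) (ν t : ℕ) :
    Submodule A (MvPolynomial (Fin r) A) :=
  match t with
  | 0 => Submodule.map (Algebra.linearMap A (MvPolynomial (Fin r) A)) (IN : Submodule A A) *
      modulePow N ν
  | t' + 1 => modulePow N (ν + 1) * homogeneousSubmodule (Fin r) A t'

/-- The quotient `S_{ν+t}/N^{ν+1}S_{t-1}`. -/
noncomputable abbrev BRQuotGen {A : Type*} [CommRing A] {r : ℕ}
    (N : Submodule A (Fin r → A)) (IN : Ideal A) (ν t : ℕ) :=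
  homogeneousSubmodule (Fin r) A (ν + t) ⧸
    (NSdenom N IN ν t).comap (homogeneousSubmodule (Fin r) A (ν + t)).subtype

/-- The ideal `𝔟 = ker φ = (X_ij - c_ij | i, j) ⊆ B`, `c_ij = w j i`. -/
noncomputable def substKernel (A : Type*) [CommRing A] [IsLocalRing A] (r n : ℕ)
    (B : Type*) [CommRing B] [Algebra (MvPolynomial (Fin r × Fin n) A) B]
    [IsLocalization.AtPrime B (gradedMaxIdeal A r n)]
    (w : Fin n → (Fin r → A)) : Ideal B :=
  Ideal.span (Set.range fun p : Fin r × Fin n =>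
    xvar A r n B p -
      algebraMap (MvPolynomial (Fin r × Fin n) A) B (MvPolynomial.C (w p.2 p.1)))

/-- The canonical ring map `A → B = A[X]_{(𝔪,X)}`, a section of the substitution map `φ`. -/
noncomputable def baseHom (A : Type*) [CommRing A] [IsLocalRing A] (r n : ℕ)
    (B : Type*) [CommRing B] [Algebra (MvPolynomial (Fin r × Fin n) A) B]
    [IsLocalization.AtPrime B (gradedMaxIdeal A r n)] : A →+* B :=
  (algebraMap (MvPolynomial (Fin r × Fin n) A) B).comp
    (MvPolynomial.C : A →+* MvPolynomial (Fin r × Fin n) A)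

/-!
The substitution `φ : B → A`, `X_ij ↦ c_ij`, is a surjection with kernel `𝔟`, split by `A → B`.
Applied to coefficients it maps `G_k` onto `S_k` with kernel `𝔟 G_k`, because `G_k` is free on
the monomials of degree `k`. It sends the columns and the maximal minors of `X` to those of `Ñ`,
hence `L^{ν+1}G_{t-1}` onto `N^{ν+1}S_{t-1}`. Therefore
`(G_{ν+t}/L^{ν+1}G_{t-1}) ⊗_B B/𝔟 = G_{ν+t}/(L^{ν+1}G_{t-1} + 𝔟 G_{ν+t}) ≅ S_{ν+t}/N^{ν+1}S_{t-1}`.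
-/

lemma apply_mem_of_le_smul_top {R ι : Type*} [CommRing R] {I : Ideal R}
    {N : Submodule R (ι → R)} (hN : N ≤ I • ⊤) {v : ι → R} (hv : v ∈ N) (i : ι) : v i ∈ I := by
  have hproj : I • (⊤ : Submodule R (ι → R)) ≤ Submodule.comap (LinearMap.proj i) I :=
    Submodule.smul_le.mpr fun a ha u _ => by simpa using I.mul_mem_right (u i) ha
  exact hproj (hN hv)

namespace Submodule

section

variable {R M : Type*} [CommRing R] [AddCommGroup M] [Module R M] {I : Ideal R}
  {U : Submodule R M}

lemma mkQ_mem_smul_top_of_mem_sup {x : M} (hx : x ∈ U ⊔ I • ⊤) :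
    U.mkQ x ∈ I • (⊤ : Submodule R (M ⧸ U)) := by
  obtain ⟨u, hu, y, hy, rfl⟩ := mem_sup.mp hx
  rw [map_add, mkQ_apply, (Quotient.mk_eq_zero U).mpr hu, zero_add]
  have : (I • ⊤ : Submodule R M).map U.mkQ ≤ I • ⊤ := by
    rw [map_smul'']
    exact smul_mono_right I le_top
  exact this (mem_map_of_mem hy)

end

variable {R S M M' : Type*} [CommRing R] [CommRing S] {σ : R →+* S} [RingHomSurjective σ]
  [AddCommGroup M] [Module R M] [AddCommGroup M'] [Module S M']

lemma map_restrict_comap_subtype (F : M →ₛₗ[σ] M') {P : Submodule R M} {P' : Submodule S M'}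
    (hF : ∀ x ∈ P, F x ∈ P') {U : Submodule R M} (hU : U ≤ P) :
    (U.comap P.subtype).map (F.restrict hF) = (U.map F).comap P'.subtype := by
  ext ⟨y, hy⟩
  simp only [mem_map, mem_comap, subtype_apply, Subtype.exists, LinearMap.restrict_apply,
    Subtype.mk.injEq]
  exact ⟨fun ⟨x, _, hx, hxy⟩ => ⟨x, hx, hxy⟩, fun ⟨x, hx, hxy⟩ => ⟨x, hU hx, hx, hxy⟩⟩

variable {g : M →ₛₗ[σ] M'} {I : Ideal R} {U : Submodule R M} {V : Submodule S M'}

noncomputable def quotSMulTopLift (hI : I ≤ RingHom.ker σ) (hV : U.map g = V) :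
    ((M ⧸ U) ⧸ I • (⊤ : Submodule R (M ⧸ U))) →ₛₗ[σ] M' ⧸ V :=
  liftQ (I • ⊤)
    (U.liftQ (V.mkQ.comp g) fun x hx => by
      simpa [← hV] using mem_map_of_mem (f := g) hx)
    (smul_le.mpr fun a ha x _ => by
      rw [LinearMap.mem_ker, LinearMap.map_smulₛₗ, RingHom.mem_ker.mp (hI ha), zero_smul])

@[simp]
lemma quotSMulTopLift_mk (hI : I ≤ RingHom.ker σ) (hV : U.map g = V) (x : M) :
    quotSMulTopLift hI hV (Quotient.mk (Quotient.mk x)) = Quotient.mk (g x) :=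
  rfl

theorem bijective_quotSMulTopLift (hI : I ≤ RingHom.ker σ) (hV : U.map g = V)
    (hg : Function.Surjective g) (hker : LinearMap.ker g ≤ I • ⊤) :
    Function.Bijective (quotSMulTopLift hI hV) := by
  refine ⟨(injective_iff_map_eq_zero _).mpr fun q hq => ?_, fun q => ?_⟩
  · obtain ⟨x, rfl⟩ := mkQ_surjective _ q
    obtain ⟨x, rfl⟩ := mkQ_surjective _ x
    rw [mkQ_apply, mkQ_apply, quotSMulTopLift_mk, Quotient.mk_eq_zero, ← hV,
      ← mem_comap, comap_map_eq] at hq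
    exact (Quotient.mk_eq_zero _).mpr
      (mkQ_mem_smul_top_of_mem_sup (sup_le_sup_left hker U hq))
  · obtain ⟨y, rfl⟩ := mkQ_surjective V q
    obtain ⟨x, rfl⟩ := hg y
    exact ⟨Quotient.mk (Quotient.mk x), rfl⟩

end Submodule

theorem LinearMap.nonempty_linearEquiv_compHom_of_bijective {R S P Q : Type*} [CommRing R]
    [CommRing S] {σ : R →+* S} (s : S →+* R) (hs : ∀ a, σ (s a) = a) [AddCommGroup P]
    [Module R P] [AddCommGroup Q] [Module S Q] (h : P →ₛₗ[σ] Q)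
    (hh : Function.Bijective h) :
    Nonempty (letI : Module S P := Module.compHom P s; P ≃ₗ[S] Q) :=
  letI : Module S P := Module.compHom P s
  ⟨LinearEquiv.ofBijective
    { toFun := h
      map_add' := h.map_add
      map_smul' := fun a x => (h.map_smulₛₗ (s a) x).trans (by rw [hs]; rfl) } hh⟩

namespace MvPolynomial

variable {σ R S : Type*} [CommRing R] [CommRing S]

noncomputable def mapₛₗ (f : R →+* S) : MvPolynomial σ R →ₛₗ[f] MvPolynomial σ S where
  toFun := map f
  map_add' := map_add _
  map_smul' b p := by simp [smul_eq_C_mul]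

@[simp]
lemma mapₛₗ_apply (f : R →+* S) (p : MvPolynomial σ R) : mapₛₗ f p = map f p := rfl

noncomputable def homogeneousMapₛₗ (f : R →+* S) (k : ℕ) :
    homogeneousSubmodule σ R k →ₛₗ[f] homogeneousSubmodule σ S k :=
  (mapₛₗ f).restrict fun p (hp : p ∈ homogeneousSubmodule σ R k) =>
    (hp.map f : map f p ∈ homogeneousSubmodule σ S k)

lemma map_homogeneousComponent (f : R →+* S) (k : ℕ) (p : MvPolynomial σ R) :
    map f (homogeneousComponent k p) = homogeneousComponent k (map f p) := by
  ext d
  simp only [coeff_map, coeff_homogeneousComponent]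
  split_ifs <;> simp

lemma mem_ideal_smul_homogeneousSubmodule {I : Ideal R} {k : ℕ} {p : MvPolynomial σ R}
    (hp : p ∈ homogeneousSubmodule σ R k) (hI : ∀ m, coeff m p ∈ I) :
    p ∈ I • homogeneousSubmodule σ R k := by
  rw [p.as_sum]
  refine Submodule.sum_mem _ fun m hm => ?_
  rw [← mul_one (coeff m p), ← smul_eq_mul, ← smul_monomial]
  refine Submodule.smul_mem_smul (hI m) (isHomogeneous_monomial _ ?_)
  rw [Finsupp.degree_eq_weight_one]
  exact hp (mem_support_iff.mp hm)

lemma ker_homogeneousMapₛₗ_le (f : R →+* S) (k : ℕ) :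
    LinearMap.ker (homogeneousMapₛₗ (σ := σ) f k) ≤ RingHom.ker f • ⊤ := by
  intro p hp
  rw [Submodule.mem_smul_top_iff]
  refine mem_ideal_smul_homogeneousSubmodule p.2 fun m => ?_
  rw [RingHom.mem_ker, ← coeff_map]
  exact congrArg (fun q => coeff m q.1) (LinearMap.mem_ker.mp hp)

variable (f : R →+* S) [RingHomSurjective f]

lemma map_mapₛₗ_mul (U V : Submodule R (MvPolynomial σ R)) :
    (U * V).map (mapₛₗ f) = U.map (mapₛₗ f) * V.map (mapₛₗ f) := by
  have hF : ⇑(mapₛₗ f) = ⇑(map f : MvPolynomial σ R →+* MvPolynomial σ S) := rfl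
  rw [Submodule.mul_eq_span_mul_set, Submodule.map_span, Submodule.mul_eq_span_mul_set,
    Submodule.map_coe, Submodule.map_coe, hF, Set.image_mul]

lemma map_mapₛₗ_pow (U : Submodule R (MvPolynomial σ R)) (k : ℕ) :
    (U ^ k).map (mapₛₗ f) = U.map (mapₛₗ f) ^ k := by
  induction k with
  | zero =>
    rw [pow_zero, pow_zero, Submodule.one_eq_span, Submodule.one_eq_span, Submodule.map_span,
      Set.image_singleton, mapₛₗ_apply, map_one]
  | succ k ih => rw [pow_succ, pow_succ, map_mapₛₗ_mul, ih]

lemma map_mapₛₗ_homogeneousSubmodule (k : ℕ) :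
    (homogeneousSubmodule σ R k).map (mapₛₗ f) = homogeneousSubmodule σ S k := by
  refine le_antisymm (Submodule.map_le_iff_le_comap.mpr fun p hp => IsHomogeneous.map hp f)
    fun p hp => ?_
  obtain ⟨q, rfl⟩ := map_surjective f RingHomSurjective.is_surjective p
  exact ⟨homogeneousComponent k q, homogeneousComponent_mem k q,
    by rw [mapₛₗ_apply, map_homogeneousComponent, homogeneousComponent_eq_self hp]⟩

lemma surjective_homogeneousMapₛₗ (k : ℕ) :
    Function.Surjective (homogeneousMapₛₗ (σ := σ) f k) := by
  rintro ⟨p, hp⟩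
  obtain ⟨q, hq, rfl⟩ := (map_mapₛₗ_homogeneousSubmodule f k).ge hp
  exact ⟨⟨q, hq⟩, rfl⟩

lemma map_homogeneousMapₛₗ_comap_subtype {k : ℕ} {U : Submodule R (MvPolynomial σ R)}
    (hU : U ≤ homogeneousSubmodule σ R k) :
    (U.comap (homogeneousSubmodule σ R k).subtype).map (homogeneousMapₛₗ f k) =
      (U.map (mapₛₗ f)).comap (homogeneousSubmodule σ S k).subtype :=
  Submodule.map_restrict_comap_subtype _ _ hU

end MvPolynomial

lemma symEmb_apply (C : Type*) [CommRing C] (r : ℕ) (v : Fin r → C) :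
    symEmb C r v = ∑ i, v i • X i := by
  simp [symEmb]

lemma symEmb_mem_homogeneousSubmodule (C : Type*) [CommRing C] (r : ℕ) (v : Fin r → C) :
    symEmb C r v ∈ homogeneousSubmodule (Fin r) C 1 := by
  rw [symEmb_apply]
  exact Submodule.sum_mem _ fun i _ => Submodule.smul_mem _ _ (isHomogeneous_X C i)

lemma map_symEmb {C D : Type*} [CommRing C] [CommRing D] (f : C →+* D) {r : ℕ}
    (v : Fin r → C) : map f (symEmb C r v) = symEmb D r (f ∘ v) := by
  simp [symEmb_apply, smul_eq_C_mul]

section Degrees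

variable (A : Type*) [CommRing A] {r n : ℕ} (B : Type*) [CommRing B]
  [Algebra (MvPolynomial (Fin r × Fin n) A) B]

lemma Lpow_le_homogeneousSubmodule (ν : ℕ) :
    Lpow A r n B ν ≤ homogeneousSubmodule (Fin r) B ν := by
  rw [Lpow, ← homogeneousSubmodule_one_pow]
  refine pow_le_pow_left' ?_ ν
  rintro _ ⟨v, -, rfl⟩
  exact symEmb_mem_homogeneousSubmodule B r v

lemma LGdenom_le_homogeneousSubmodule (ν t : ℕ) :
    LGdenom A r n B ν t ≤ homogeneousSubmodule (Fin r) B (ν + t) := by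
  cases t with
  | zero =>
    have hI : maxMinorsSub A r n B ≤ homogeneousSubmodule (Fin r) B 0 := by
      rintro _ ⟨b, -, rfl⟩
      exact isHomogeneous_C _ b
    change maxMinorsSub A r n B * Lpow A r n B ν ≤ _
    simpa using (mul_le_mul' hI (Lpow_le_homogeneousSubmodule A B ν)).trans
      (homogeneousSubmodule_mul 0 ν)
  | succ t =>
    change Lpow A r n B (ν + 1) * homogeneousSubmodule (Fin r) B t ≤ _
    simpa [add_right_comm, add_assoc] using
      (mul_le_mul' (Lpow_le_homogeneousSubmodule A B (ν + 1)) le_rfl).trans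
        (homogeneousSubmodule_mul (ν + 1) t)

end Degrees

section GenericSubstitution

variable {A : Type*} [CommRing A] [IsLocalRing A] {ι : Type*}

lemma residue_comp_eval_eq {c : ι → A} (hc : ∀ i, c i ∈ maximalIdeal A) :
    (residue A).comp (eval c) = (residue A).comp constantCoeff :=
  MvPolynomial.ringHom_ext (fun a => by simp)
    fun i => by simpa [residue_eq_zero_iff] using hc i

variable (A) {r n : ℕ} (B : Type*) [CommRing B] [Algebra (MvPolynomial (Fin r × Fin n) A) B]
  [IsLocalization.AtPrime B (gradedMaxIdeal A r n)]
  {w : Fin n → Fin r → A} (hw : ∀ j i, w j i ∈ maximalIdeal A)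

include hw in
lemma isUnit_eval_of_mem_primeCompl {y : MvPolynomial (Fin r × Fin n) A}
    (hy : y ∈ (gradedMaxIdeal A r n).primeCompl) :
    IsUnit (eval (fun p => w p.2 p.1) y) := by
  rw [← residue_ne_zero_iff_isUnit, ← RingHom.comp_apply,
    residue_comp_eval_eq (c := fun p : Fin r × Fin n => w p.2 p.1) fun p => hw p.2 p.1, ne_eq,
    ← RingHom.mem_ker, ← gradedMaxIdeal_eq_ker]
  exact hy

include hw in
noncomputable def substHom : B →+* A :=
  IsLocalization.lift (M := (gradedMaxIdeal A r n).primeCompl) (S := B)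
    fun y => isUnit_eval_of_mem_primeCompl A hw y.2

@[simp]
lemma substHom_algebraMap (p : MvPolynomial (Fin r × Fin n) A) :
    substHom A B hw (algebraMap _ B p) = eval (fun p => w p.2 p.1) p :=
  IsLocalization.lift_eq _ _

@[simp]
lemma substHom_xvar (p : Fin r × Fin n) : substHom A B hw (xvar A r n B p) = w p.2 p.1 := by
  simp [xvar]

@[simp]
lemma substHom_baseHom (a : A) : substHom A B hw (baseHom A r n B a) = a := by
  simp [baseHom]

instance : RingHomSurjective (substHom A B hw) :=
  ⟨fun a => ⟨baseHom A r n B a, substHom_baseHom A B hw a⟩⟩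

lemma ker_substHom : RingHom.ker (substHom A B hw) = substKernel A r n B w := by
  have hgen (p : Fin r × Fin n) : xvar A r n B p - algebraMap _ B (C (w p.2 p.1)) ∈
      substKernel A r n B w := Ideal.subset_span ⟨p, rfl⟩
  refine le_antisymm (fun b hb => ?_) (Ideal.span_le.mpr ?_)
  · -- `B → B/𝔟` factors through `φ`: both sides agree on `C a` and `X p`, hence on `B`.
    have hπ : Ideal.Quotient.mk (substKernel A r n B w) =
        (Ideal.Quotient.mk _).comp ((baseHom A r n B).comp (substHom A B hw)) := by
      refine IsLocalization.ringHom_ext (gradedMaxIdeal A r n).primeCompl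
        (MvPolynomial.ringHom_ext (fun a => ?_) fun p => ?_)
      · simp [baseHom]
      · simpa [baseHom, xvar] using Ideal.Quotient.eq.mpr (hgen p)
    rw [← Ideal.Quotient.eq_zero_iff_mem, hπ]
    simp [RingHom.mem_ker.mp hb]
  · rintro _ ⟨p, rfl⟩
    simp

variable {N : Submodule A (Fin r → A)}

lemma map_Lpow (hN : Submodule.span A (Set.range w) = N) (ν : ℕ) :
    (Lpow A r n B ν).map (mapₛₗ (substHom A B hw)) = modulePow N ν := by
  rw [Lpow, modulePow, map_mapₛₗ_pow, genericColSpan, ← hN, Submodule.map_span,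
    Submodule.map_span, Submodule.map_span, ← Set.range_comp, ← Set.range_comp,
    ← Set.range_comp]
  congr
  funext j
  simp [map_symEmb, Function.comp_def]

lemma map_maxMinorsSub :
    (maxMinorsSub A r n B).map (mapₛₗ (substHom A B hw)) =
      Submodule.map (Algebra.linearMap A (MvPolynomial (Fin r) A))
        (fittingIdeal w : Submodule A A) := by
  rw [maxMinorsSub, maxMinorsIdeal, fittingIdeal, Ideal.span, Ideal.span, Submodule.map_span,
    Submodule.map_span, Submodule.map_span, ← Set.range_comp, ← Set.range_comp,
    ← Set.range_comp]
  congr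
  funext c
  simp [RingHom.map_det, RingHom.mapMatrix_apply, Matrix.map]

lemma map_LGdenom (hN : Submodule.span A (Set.range w) = N) (ν t : ℕ) :
    (LGdenom A r n B ν t).map (mapₛₗ (substHom A B hw)) = NSdenom N (fittingIdeal w) ν t := by
  cases t <;>
    simp only [LGdenom, NSdenom, map_mapₛₗ_mul, map_Lpow A B hw hN, map_maxMinorsSub,
      map_mapₛₗ_homogeneousSubmodule]

end GenericSubstitution

theorem generic_quotient_base_change_iso_general
    (A : Type*) [CommRing A] [IsLocalRing A]
    (d : ℕ)
    (r : ℕ) (n : ℕ)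
    (N : Submodule A (Fin r → A)) (hN : IsParameterModule A d r N)
    (w : Fin n → (Fin r → A)) (hw : Submodule.span A (Set.range w) = N)
    (B : Type*) [CommRing B] [Algebra (MvPolynomial (Fin r × Fin n) A) B]
    [IsLocalization.AtPrime B (gradedMaxIdeal A r n)]
    (ν t : ℕ) :
    Nonempty (
      letI : Module A
          (GQuot A r n B ν t ⧸
            (substKernel A r n B w • (⊤ : Submodule B (GQuot A r n B ν t)))) :=
        Module.compHom _ (baseHom A r n B)
      (GQuot A r n B ν t ⧸
          (substKernel A r n B w • (⊤ : Submodule B (GQuot A r n B ν t)))) ≃ₗ[A]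
        BRQuotGen N (fittingIdeal w) ν t) := by
  have hwm (j : Fin n) (i : Fin r) : w j i ∈ maximalIdeal A :=
    apply_mem_of_le_smul_top hN.le_smul_top (hw ▸ Submodule.subset_span ⟨j, rfl⟩) i
  have hker := ker_substHom A B hwm
  refine LinearMap.nonempty_linearEquiv_compHom_of_bijective (baseHom A r n B)
    (substHom_baseHom A B hwm) _ (Submodule.bijective_quotSMulTopLift hker.ge ?_
      (surjective_homogeneousMapₛₗ _ _) (hker ▸ ker_homogeneousMapₛₗ_le _ _))
  rw [map_homogeneousMapₛₗ_comap_subtype _ (LGdenom_le_homogeneousSubmodule A B ν t),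
    map_LGdenom A B hwm hw]

theorem generic_quotient_base_change_iso
    (A : Type*) [CommRing A] [IsNoetherianRing A] [IsLocalRing A]
    (d : ℕ) (hd : 0 < d) (hdim : ringKrullDim A = (d : ℕ))
    (r : ℕ) (hr : 0 < r) (n : ℕ) (hn : n = d + r - 1)
    (N : Submodule A (Fin r → A)) (hN : IsParameterModule A d r N)
    (w : Fin n → (Fin r → A)) (hw : Submodule.span A (Set.range w) = N)
    (B : Type*) [CommRing B] [Algebra (MvPolynomial (Fin r × Fin n) A) B]
    [IsLocalization.AtPrime B (gradedMaxIdeal A r n)]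
    (ν t : ℕ) :
    Nonempty (
      letI : Module A
          (GQuot A r n B ν t ⧸
            (substKernel A r n B w • (⊤ : Submodule B (GQuot A r n B ν t)))) :=
        Module.compHom _ (baseHom A r n B)
      (GQuot A r n B ν t ⧸
          (substKernel A r n B w • (⊤ : Submodule B (GQuot A r n B ν t)))) ≃ₗ[A]
        BRQuotGen N (fittingIdeal w) ν t) :=
  generic_quotient_base_change_iso_general A d r n N hN w hw B ν t
end

section
/- In the generic setting: for every prime 𝔭 ∈ Min_B(B/I_r(X)B), the ideal I_{r−1}(X)B of (r−1)-minors of X is not contained in 𝔭. -/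
/-!
STATEMENT 12: In the generic setting: for every prime `𝔭 ∈ Min_B(B/I_r(X)B)` (a minimal
prime over the ideal `I_r(X)B` of maximal minors of the generic matrix), the ideal
`I_{r-1}(X)B` of `(r-1) × (r-1)` minors of `X` is not contained in `𝔭`.
(For `r = 1`, `I_0(X)B` is the unit ideal — a `0 × 0` minor is the empty determinant `1` —
so the statement holds with this convention.)
-/

open MvPolynomial IsLocalRing

/-!
The minimal primes of `B` over `I_r(X)B` are the localizations of the minimal primes `P` of `A[X]`
over `I_r(X)`, so it suffices to show that a leading `(r-1)`-minor of `X` is not in such a `P`.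
Over the residue field `κ(P)` all maximal minors of `X` vanish, so there `X` factors as `U V`
through `κ(P)^{r-1}`. Hence the residue map at `P` factors through the substitution `X ↦ Y Z`, with
`Y`, `Z` generic `r × (r-1)` and `(r-1) × n` matrices over `κ(P)`, and the kernel `Q` of this
substitution lies in `P`. Since `κ(P)[Y, Z]` is a domain and `Y Z` has rank `< r`, `Q` is a prime
containing `I_r(X)`, so `Q = P` by minimality. But the leading `(r-1)`-minor of `Y Z` is nonzero:
it specializes to `1`.
-/

namespace Matrix

variable {m n ι R : Type*}

noncomputable def maxMinors [Fintype m] [DecidableEq m] [CommRing R] (M : Matrix m n R) :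
    Ideal R :=
  Ideal.span (Set.range fun c : m ↪ n => (M.submatrix id c).det)

theorem maxMinors_map {S : Type*} [Fintype m] [DecidableEq m] [CommRing R] [CommRing S]
    (f : R →+* S) (M : Matrix m n R) : M.maxMinors.map f = (M.map f).maxMinors := by
  simp only [maxMinors, Ideal.map_span, ← Set.range_comp, Function.comp_def, RingHom.map_det]
  rfl

theorem maxMinors_mul_eq_bot [Fintype m] [DecidableEq m] [CommRing R] [IsDomain R] [Fintype ι]
    (U : Matrix m ι R) (V : Matrix ι n R) (hι : Fintype.card ι < Fintype.card m) :
    (U * V).maxMinors = ⊥ := by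
  rw [maxMinors, Ideal.span_eq_bot, Set.forall_mem_range]
  intro c
  by_contra hdet
  rw [submatrix_mul _ _ _ _ _ Function.bijective_id, submatrix_id_id] at hdet
  have hfull := rank_of_det_ne_zero hdet
  have hsmall := (rank_mul_le_left U (V.submatrix id c)).trans U.rank_le_card_width
  omega

theorem mul_submatrix_one_mul_submatrix_one_mul {κ : Type*} [Fintype ι] [DecidableEq ι]
    [Fintype κ] [DecidableEq κ] [CommRing R] (e : ι ↪ κ) (U : Matrix m ι R) (V : Matrix ι n R) :
    U * (1 : Matrix κ κ R).submatrix e id * ((1 : Matrix κ κ R).submatrix id e * V) = U * V := by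
  rw [Matrix.mul_assoc, ← Matrix.mul_assoc _ _ V, ← submatrix_mul _ _ _ _ _ Function.bijective_id,
    Matrix.mul_one, submatrix_one_embedding, Matrix.one_mul]

theorem exists_mul_eq_of_maxMinors_eq_bot {K : Type*} [Fintype m] [DecidableEq m] [Field K]
    [Fintype n] [Fintype ι] (M : Matrix m n K) (hM : M.maxMinors = ⊥)
    (hι : Fintype.card m ≤ Fintype.card ι + 1) :
    ∃ (U : Matrix m ι K) (V : Matrix ι n K), U * V = M := by
  classical
  obtain ⟨κ, a, ha, hspan, hli⟩ := exists_linearIndependent' K M.col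
  have : Fintype κ := Fintype.ofInjective a ha
  have hcol : ∀ j, ∃ v, M.submatrix id a *ᵥ v = M.col j := by
    intro j
    have hj : M.col j ∈ LinearMap.range (M.submatrix id a).mulVecLin := by
      rw [range_mulVecLin, show (M.submatrix id a).col = M.col ∘ a from rfl, hspan]
      exact Submodule.subset_span (Set.mem_range_self j)
    exact LinearMap.mem_range.mp hj
  choose v hv using hcol
  have hκ : Fintype.card κ < Fintype.card m := by
    refine (hli.fintype_card_le_finrank.trans (Module.finrank_fintype_fun_eq_card K).le).lt_of_ne ?_
    intro hcard
    let c : m ↪ n := (Fintype.equivOfCardEq hcard.symm).toEmbedding.trans ⟨a, ha⟩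
    have hunit : IsUnit (M.submatrix id c) :=
      linearIndependent_cols_iff_isUnit.mp (hli.comp _ (Equiv.injective _))
    have hdet : (M.submatrix id c).det ∈ M.maxMinors := Ideal.subset_span ⟨c, rfl⟩
    rw [hM, Ideal.mem_bot] at hdet
    exact ((isUnit_iff_isUnit_det _).mp hunit).ne_zero hdet
  obtain ⟨e⟩ := Function.Embedding.nonempty_of_card_le (α := κ) (β := ι) (by omega)
  refine ⟨_, _, (mul_submatrix_one_mul_submatrix_one_mul e (M.submatrix id a)
    (of fun k j => v j k)).trans ?_⟩
  ext i j
  exact congrFun (hv j) i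

end Matrix

namespace MvPolynomial

open Matrix

variable {A K m n : Type*} [CommRing A] [CommRing K] (ι : Type*) [Fintype ι]

noncomputable def productSubst (φ : A →+* K) :
    MvPolynomial (m × n) A →+* MvPolynomial ((m × ι) ⊕ (ι × n)) K :=
  eval₂Hom (C.comp φ) fun p => ∑ l, X (Sum.inl (p.1, l)) * X (Sum.inr (l, p.2))

variable {ι}

theorem mvPolynomialX_map_productSubst (φ : A →+* K) :
    (mvPolynomialX m n A).map (productSubst ι φ) =
      of (fun i l => (X (Sum.inl (i, l)) : MvPolynomial ((m × ι) ⊕ (ι × n)) K)) *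
        of fun l j => X (Sum.inr (l, j)) := by
  refine Matrix.ext fun i j => ?_
  simp only [map_apply, mvPolynomialX_apply, productSubst, eval₂Hom_X']
  rfl

theorem eval_comp_productSubst (φ : A →+* K) (U : Matrix m ι K) (V : Matrix ι n K) :
    (eval (Sum.elim (fun p => U p.1 p.2) fun p => V p.1 p.2)).comp (productSubst ι φ) =
      eval₂Hom φ fun p => (U * V : Matrix m n K) p.1 p.2 := by
  ext <;> simp [productSubst, Matrix.mul_apply]

theorem maxMinors_le_ker_productSubst [Fintype m] [DecidableEq m] [IsDomain K] (φ : A →+* K)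
    (hι : Fintype.card ι < Fintype.card m) :
    (mvPolynomialX m n A).maxMinors ≤ RingHom.ker (productSubst ι φ) := by
  rw [← Ideal.map_eq_bot_iff_le_ker, maxMinors_map, mvPolynomialX_map_productSubst]
  exact maxMinors_mul_eq_bot _ _ hι

theorem det_submatrix_mvPolynomialX_notMem_ker_productSubst [DecidableEq ι] [Nontrivial K]
    (φ : A →+* K) (e₁ : ι ↪ m) (e₂ : ι ↪ n) :
    ((mvPolynomialX m n A).submatrix e₁ e₂).det ∉ RingHom.ker (productSubst ι φ) := by
  classical
  intro h
  let U : Matrix m ι K := (1 : Matrix m m K).submatrix id e₁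
  let V : Matrix ι n K := (1 : Matrix n n K).submatrix e₂ id
  have hUV : (U * V).submatrix e₁ e₂ = 1 := by
    rw [submatrix_mul _ _ _ _ _ Function.bijective_id]
    simp [U, V]
  have h1 := congrArg (eval (Sum.elim (fun p => U p.1 p.2) fun p => V p.1 p.2))
    (RingHom.mem_ker.mp h)
  rw [← RingHom.comp_apply, eval_comp_productSubst, RingHom.map_det, RingHom.mapMatrix_apply,
    ← submatrix_map, coe_eval₂Hom, mvPolynomialX_map_eval₂, hUV, det_one, map_zero] at h1
  exact one_ne_zero h1

theorem det_submatrix_mvPolynomialX_notMem_of_mem_minimalPrimes [Fintype m] [DecidableEq m]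
    [Fintype n] [DecidableEq ι] (hι : Fintype.card ι + 1 = Fintype.card m) (e₁ : ι ↪ m)
    (e₂ : ι ↪ n) {P : Ideal (MvPolynomial (m × n) A)}
    (hP : P ∈ (mvPolynomialX m n A).maxMinors.minimalPrimes) :
    ((mvPolynomialX m n A).submatrix e₁ e₂).det ∉ P := by
  have := hP.isPrime
  let g := algebraMap (MvPolynomial (m × n) A) P.ResidueField
  let χ : MvPolynomial (m × n) A →+* _ := productSubst ι (g.comp C)
  obtain ⟨U, V, hUV⟩ : ∃ (U : Matrix m ι P.ResidueField) (V : Matrix ι n _),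
      U * V = (mvPolynomialX m n A).map g := by
    refine exists_mul_eq_of_maxMinors_eq_bot _ ?_ hι.ge
    rw [← maxMinors_map, Ideal.map_eq_bot_iff_le_ker, Ideal.ker_algebraMap_residueField]
    exact hP.1.2
  have hg : (eval (Sum.elim (fun p => U p.1 p.2) fun p => V p.1 p.2)).comp χ = g := by
    rw [eval_comp_productSubst]
    ext p
    · simp [g]
    · rw [eval₂Hom_X']
      exact congrFun (congrFun hUV p.1) p.2
  have hχP : RingHom.ker χ ≤ P := by
    intro x hx
    rw [← Ideal.algebraMap_residueField_eq_zero]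
    change g x = 0
    rw [← hg, RingHom.comp_apply, RingHom.mem_ker.mp hx, map_zero]
  have hPχ : P ≤ RingHom.ker χ :=
    hP.2 ⟨RingHom.ker_isPrime χ, maxMinors_le_ker_productSubst _ (by omega)⟩ hχP
  exact fun h => det_submatrix_mvPolynomialX_notMem_ker_productSubst _ e₁ e₂ (hPχ h)

end MvPolynomial

section GenericSetting

variable (A : Type*) [CommRing A] (r n : ℕ) (B : Type*) [CommRing B]
  [Algebra (MvPolynomial (Fin r × Fin n) A) B]

theorem maxMinorsIdeal_eq_map :
    maxMinorsIdeal A r n B =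
      (Matrix.mvPolynomialX (Fin r) (Fin n) A).maxMinors.map (algebraMap _ B) := by
  rw [Matrix.maxMinors_map]
  rfl

theorem algebraMap_det_submatrix_mvPolynomialX_mem_minorsIdeal {s : ℕ} (e₁ : Fin s ↪ Fin r)
    (e₂ : Fin s ↪ Fin n) :
    algebraMap _ B ((Matrix.mvPolynomialX (Fin r) (Fin n) A).submatrix e₁ e₂).det ∈
      minorsIdeal A r n B s := by
  rw [RingHom.map_det]
  exact Ideal.subset_span ⟨(e₁, e₂), rfl⟩

theorem minorsIdeal_zero : minorsIdeal A r n B 0 = ⊤ := by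
  rw [Ideal.eq_top_iff_one, minorsIdeal]
  exact Ideal.subset_span ⟨(Function.Embedding.ofIsEmpty, Function.Embedding.ofIsEmpty),
    Matrix.det_isEmpty⟩

end GenericSetting

theorem submaximal_minors_not_le_minimal_prime_general
    (A : Type*) [CommRing A] [IsLocalRing A]
    (d : ℕ) (r : ℕ) (n : ℕ) (hn : n = d + r - 1)
    (B : Type*) [CommRing B] [Algebra (MvPolynomial (Fin r × Fin n) A) B]
    [IsLocalization.AtPrime B (gradedMaxIdeal A r n)]
    (𝔭 : Ideal B) (h𝔭 : 𝔭 ∈ (maxMinorsIdeal A r n B).minimalPrimes) :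
    ¬ minorsIdeal A r n B (r - 1) ≤ 𝔭 := by
  rcases Nat.eq_zero_or_pos r with rfl | hr
  · rw [minorsIdeal_zero, top_le_iff]
    exact h𝔭.isPrime.ne_top
  intro hle
  rw [maxMinorsIdeal_eq_map,
    IsLocalization.minimalPrimes_map (gradedMaxIdeal A r n).primeCompl B] at h𝔭
  refine MvPolynomial.det_submatrix_mvPolynomialX_notMem_of_mem_minimalPrimes
    (ι := Fin (r - 1)) (by simp only [Fintype.card_fin]; omega) (Fin.castLEEmb (Nat.sub_le r 1))
    (Fin.castLEEmb (by omega)) h𝔭 ?_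
  exact hle (algebraMap_det_submatrix_mvPolynomialX_mem_minorsIdeal A r n B _ _)

theorem submaximal_minors_not_le_minimal_prime
    (A : Type*) [CommRing A] [IsNoetherianRing A] [IsLocalRing A]
    (d : ℕ) (hd : 0 < d) (hdim : ringKrullDim A = (d : ℕ))
    (r : ℕ) (hr : 0 < r) (n : ℕ) (hn : n = d + r - 1)
    (B : Type*) [CommRing B] [Algebra (MvPolynomial (Fin r × Fin n) A) B]
    [IsLocalization.AtPrime B (gradedMaxIdeal A r n)]
    (𝔭 : Ideal B) (h𝔭 : 𝔭 ∈ (maxMinorsIdeal A r n B).minimalPrimes) :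
    ¬ minorsIdeal A r n B (r - 1) ≤ 𝔭 :=
  submaximal_minors_not_le_minimal_prime_general A d r n hn B 𝔭 h𝔭
end
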